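/- Let F = (f_1,...,f_p) be a unit-norm (p/d)-tight frame for its span, where d = dim span F < n = dim H. Then the minimum number r_0 of unit-norm vectors that must be added to F to obtain a tight frame for H equals: (a) (n−d)p/d if (n−d)p/d < n and (n−d)p/d ∈ ℕ; (b) n if (n−d)p/d < n and (n−d)p/d ∉ ℕ; (c) ⌈(n−d)p/d⌉ if (n−d)p/d ≥ n. -/

import Mathlib

open scoped BigOperators

noncomputable def frameOp {n p : ℕ} (f : Fin p → EuclideanSpace ℂ (Fin n)) :
    EuclideanSpace ℂ (Fin n) →L[ℂ] EuclideanSpace ℂ (Fin n) :=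
  ∑ i, (innerSL ℂ (f i)).smulRight (f i)

def HasEigenvalues {n : ℕ} (S : EuclideanSpace ℂ (Fin n) →L[ℂ] EuclideanSpace ℂ (Fin n))
    (Λ : Fin n → ℝ) : Prop :=
  Antitone Λ ∧ ∃ e : OrthonormalBasis (Fin n) ℂ (EuclideanSpace ℂ (Fin n)),
    ∀ i, S (e i) = (Λ i : ℂ) • e i

noncomputable def tailSum {n : ℕ} (hn : 0 < n) (Λ : Fin n → ℝ) (k : ℕ) : ℝ :=
  ∑ i ∈ Finset.range k, Λ ⟨n - 1 - i, by omega⟩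

def Completable {n p : ℕ} (f : Fin p → EuclideanSpace ℂ (Fin n)) (a : ℕ → ℝ) (r : ℕ) : Prop :=
  ∃ (c : ℝ) (g : Fin r → EuclideanSpace ℂ (Fin n)), 0 < c ∧
    (∀ i : Fin r, ‖g i‖ ^ 2 = a (i : ℕ)) ∧
    frameOp f + frameOp g = (c : ℂ) • ContinuousLinearMap.id ℂ (EuclideanSpace ℂ (Fin n))

noncomputable def cseq {n : ℕ} (hn : 0 < n) (Λ : Fin n → ℝ) (a : ℕ → ℝ) : ℕ → ℝ
  | 0 => Λ ⟨0, hn⟩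
  | k + 1 => max (cseq hn Λ a k)
      ((1 / (k + 1 : ℝ)) * (∑ i ∈ Finset.range (k + 1), a i + tailSum hn Λ (k + 1)))

def IsBessel {n : ℕ} (g : ℕ → EuclideanSpace ℂ (Fin n)) : Prop :=
  ∃ b > 0, ∀ x : EuclideanSpace ℂ (Fin n),
    Summable (fun i => ‖(inner ℂ (g i) x : ℂ)‖ ^ 2) ∧
    ∑' i, ‖(inner ℂ (g i) x : ℂ)‖ ^ 2 ≤ b * ‖x‖ ^ 2

def CompletableInf {n p : ℕ} (f : Fin p → EuclideanSpace ℂ (Fin n)) (a : ℕ → ℝ) : Prop :=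
  ∃ (c : ℝ) (g : ℕ → EuclideanSpace ℂ (Fin n)), 0 < c ∧ IsBessel g ∧
    (∀ i, ‖g i‖ ^ 2 = a i) ∧
    ∀ x, frameOp f x + ∑' i, (inner ℂ (g i) x : ℂ) • g i = (c : ℂ) • x

/-!
Taking traces in `S_F + S_G = c • 1` gives `p + r = c n`, and testing it on a unit vector of
`span F` gives `c ≥ p / d`; hence `r ≥ (n - d) p / d`. If moreover `r < n`, some `x ≠ 0` is
orthogonal to every `g j`, so `S_F x = c x`, which forces `c = p / d` and `r = (n - d) p / d`.

Conversely, for every such `r` put `c = (p + r) / n`. The operator `c • 1 - S_F` is diagonal in an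
orthonormal basis `e` adapted to `span F ⊕ (span F)ᗮ`, with eigenvalues `λ_k ≥ 0` summing to `r`,
and at most `r` of them are nonzero (when `r < n`, only the `n - d` on `(span F)ᗮ`). It is the
frame operator of the `r` unit vectors `g j = ∑ k, √(λ_k / r) ψ (j φ(k)) e_k`, where `ψ` is the
standard additive character of `ZMod r` and `φ` is injective on the support of `λ`: orthogonality
of characters makes `S_G` diagonal in `e` with entries `λ_k`, and `‖g j‖² = ∑ k, λ_k / r = 1`.
So `r₀` is the least natural number satisfying the two constraints above.
-/

open InnerProductSpace ComplexConjugate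

section FrameOperator

variable {n p : ℕ}

lemma frameOp_eq_sum_rankOne (f : Fin p → EuclideanSpace ℂ (Fin n)) :
    frameOp f = ∑ i, rankOne ℂ (f i) (f i) := rfl

lemma frameOp_apply (f : Fin p → EuclideanSpace ℂ (Fin n)) (x : EuclideanSpace ℂ (Fin n)) :
    frameOp f x = ∑ i, inner ℂ (f i) x • f i := by
  simp [frameOp_eq_sum_rankOne]

lemma isPositive_frameOp (f : Fin p → EuclideanSpace ℂ (Fin n)) : (frameOp f).IsPositive :=
  ContinuousLinearMap.isPositive_sum _ fun i _ => isPositive_rankOne_self (f i)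

lemma trace_frameOp (f : Fin p → EuclideanSpace ℂ (Fin n)) :
    LinearMap.trace ℂ _ (frameOp f : EuclideanSpace ℂ (Fin n) →ₗ[ℂ] EuclideanSpace ℂ (Fin n)) =
      ∑ i, (‖f i‖ ^ 2 : ℂ) := by
  simp [frameOp_eq_sum_rankOne, trace_rankOne, inner_self_eq_norm_sq_to_K]

lemma frameOp_apply_of_mem_orthogonal (f : Fin p → EuclideanSpace ℂ (Fin n))
    {x : EuclideanSpace ℂ (Fin n)} (hx : x ∈ (Submodule.span ℂ (Set.range f))ᗮ) :
    frameOp f x = 0 := by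
  rw [frameOp_apply]
  refine Finset.sum_eq_zero fun i _ => ?_
  rw [hx (f i) (Submodule.subset_span (Set.mem_range_self i)), zero_smul]

end FrameOperator

section Completion

variable {n p r : ℕ} {f : Fin p → EuclideanSpace ℂ (Fin n)} {g : Fin r → EuclideanSpace ℂ (Fin n)}
  {c : ℝ}

lemma card_add_card_eq_of_frameOp_add_eq (hf : ∀ i, ‖f i‖ = 1) (hg : ∀ j, ‖g j‖ = 1)
    (h : frameOp f + frameOp g = (c : ℂ) • ContinuousLinearMap.id ℂ _) :
    (p + r : ℝ) = c * n := by
  have htr := congrArg (fun T : EuclideanSpace ℂ (Fin n) →L[ℂ] EuclideanSpace ℂ (Fin n) =>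
    LinearMap.trace ℂ _ (T : EuclideanSpace ℂ (Fin n) →ₗ[ℂ] EuclideanSpace ℂ (Fin n))) h
  simp [trace_frameOp, hf, hg] at htr
  exact_mod_cast htr

lemma le_of_frameOp_add_eq (h : frameOp f + frameOp g = (c : ℂ) • ContinuousLinearMap.id ℂ _)
    {x : EuclideanSpace ℂ (Fin n)} (hx : x ≠ 0) {μ : ℝ} (hfx : frameOp f x = (μ : ℂ) • x) :
    μ ≤ c := by
  have hgx : frameOp g x = ((c - μ : ℝ) : ℂ) • x := by
    have := congrArg (· x) h
    simp only [add_apply, hfx, smul_apply, ContinuousLinearMap.id_apply] at this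
    push_cast
    rw [sub_smul, ← this, add_sub_cancel_left]
  have hpos := (isPositive_frameOp g).re_inner_nonneg_right x
  rw [hgx, inner_smul_right, inner_self_eq_norm_sq_to_K] at hpos
  replace hpos : 0 ≤ (c - μ) * ‖x‖ ^ 2 := by simpa [← Complex.ofReal_pow] using hpos
  exact sub_nonneg.mp (nonneg_of_mul_nonneg_left hpos (by positivity))

lemma eq_of_frameOp_add_eq_of_lt {V : Submodule ℂ (EuclideanSpace ℂ (Fin n))} {α : ℝ}
    (hF : frameOp f = (α : ℂ) • V.starProjection)
    (h : frameOp f + frameOp g = (c : ℂ) • ContinuousLinearMap.id ℂ _) (hc : c ≠ 0)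
    (hr : r < n) : c = α := by
  set W := Submodule.span ℂ (Set.range g)
  have hW : W ≠ ⊤ := by
    intro htop
    have : Module.finrank ℂ W ≤ r :=
      (finrank_range_le_card (R := ℂ) g).trans_eq (Fintype.card_fin r)
    rw [htop, finrank_top, finrank_euclideanSpace_fin] at this
    omega
  obtain ⟨x, hxW, hx⟩ := Submodule.exists_mem_ne_zero_of_ne_bot
    (Submodule.orthogonal_eq_bot_iff.not.mpr hW)
  have hx' : (α : ℂ) • V.starProjection x = (c : ℂ) • x := by
    have := congrArg (· x) h
    simpa [hF, frameOp_apply_of_mem_orthogonal g hxW] using this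
  have hxV : x ∈ V := by
    have : x = ((α / c : ℝ) : ℂ) • V.starProjection x := by
      rw [Complex.ofReal_div, div_eq_inv_mul, mul_smul, hx', smul_smul,
        inv_mul_cancel₀ (by exact_mod_cast hc), one_smul]
    rw [this]
    exact V.smul_mem _ (V.starProjection_apply_mem x)
  rw [Submodule.starProjection_eq_self_iff.mpr hxV] at hx'
  exact_mod_cast (smul_left_injective ℂ hx hx').symm

end Completion

lemma sum_conj_stdAddChar_mul_mul_stdAddChar_mul (r : ℕ) [NeZero r] (a b : ZMod r) :
    ∑ z : ZMod r, conj (ZMod.stdAddChar (z * a)) * ZMod.stdAddChar (z * b) =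
      if a = b then (r : ℂ) else 0 := by
  simp_rw [← AddChar.map_neg_eq_conj, ← AddChar.map_add_eq_mul, ← mul_neg, ← mul_add,
    neg_add_eq_sub, AddChar.sum_mulShift _ (ZMod.isPrimitive_stdAddChar r), sub_eq_zero,
    eq_comm (a := b), ZMod.card]
  push_cast
  rfl

section Construction

variable {n : ℕ} {ι : Type*} [Fintype ι]

lemma frameOp_sum_smul_apply {r : ℕ} (e : OrthonormalBasis ι ℂ (EuclideanSpace ℂ (Fin n)))
    (a : Fin r → ι → ℂ) (k : ι) :
    frameOp (fun j => ∑ l, a j l • e l) (e k) = ∑ l, (∑ j, conj (a j k) * a j l) • e l := by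
  simp_rw [frameOp_apply, e.orthonormal.inner_left_fintype, Finset.smul_sum, smul_smul,
    Finset.sum_smul]
  exact Finset.sum_comm

lemma exists_frameOp_eq_diagonal (e : OrthonormalBasis ι ℂ (EuclideanSpace ℂ (Fin n)))
    {lam : ι → ℝ} (hlam : ∀ k, 0 ≤ lam k) (r : ℕ) [NeZero r] (hsum : ∑ k, lam k = r)
    (s : Finset ι) (hs : s.card ≤ r) (hsupp : ∀ k ∉ s, lam k = 0) :
    ∃ g : Fin r → EuclideanSpace ℂ (Fin n),
      (∀ j, ‖g j‖ = 1) ∧ ∀ k, frameOp g (e k) = (lam k : ℂ) • e k := by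
  classical
  obtain ⟨φ₀⟩ : Nonempty (s ↪ ZMod r) :=
    Function.Embedding.nonempty_of_card_le (by rwa [ZMod.card, Fintype.card_coe])
  set φ : ι → ZMod r := fun k => if h : k ∈ s then φ₀ ⟨k, h⟩ else 0
  have hφ : ∀ k l, lam k ≠ 0 → lam l ≠ 0 → φ k = φ l → k = l := by
    intro k l hk hl hkl
    replace hk : k ∈ s := by_contra fun h => hk (hsupp k h)
    replace hl : l ∈ s := by_contra fun h => hl (hsupp l h)
    have : φ₀ ⟨k, hk⟩ = φ₀ ⟨l, hl⟩ := by simpa [φ, hk, hl] using hkl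
    exact congrArg Subtype.val (φ₀.injective this)
  set σ := ZMod.finEquiv r
  set a : Fin r → ι → ℂ := fun j k => (√(lam k / r) : ℂ) * ZMod.stdAddChar (σ j * φ k)
  have hgram : ∀ k l, ∑ j, conj (a j k) * a j l = if k = l then (lam k : ℂ) else 0 := by
    intro k l
    have hchar : ∑ j, conj (a j k) * a j l =
        ((√(lam k / r) * √(lam l / r) : ℝ) : ℂ) * if φ k = φ l then (r : ℂ) else 0 := by
      rw [← sum_conj_stdAddChar_mul_mul_stdAddChar_mul r (φ k) (φ l), Finset.mul_sum,
        ← σ.toEquiv.sum_comp]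
      refine Finset.sum_congr rfl fun j _ => ?_
      simp only [a, map_mul, Complex.conj_ofReal, show ⇑σ.toEquiv = ⇑σ from rfl]
      push_cast
      ring
    rw [hchar]
    by_cases hkl : k = l
    · subst hkl
      have hr : (r : ℂ) ≠ 0 := NeZero.ne _
      rw [if_pos rfl, if_pos rfl, Real.mul_self_sqrt (div_nonneg (hlam k) r.cast_nonneg)]
      push_cast
      field_simp
    · rw [if_neg hkl]
      by_cases h0 : lam k = 0 ∨ lam l = 0
      · rcases h0 with h0 | h0 <;> simp [h0]
      · push Not at h0
        rw [if_neg (fun h => hkl (hφ k l h0.1 h0.2 h)), mul_zero]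
  have hdiag : ∀ j k, conj (a j k) * a j k = (lam k / r : ℝ) := by
    intro j k
    rw [Complex.conj_mul', norm_mul, AddChar.norm_apply, mul_one, Complex.norm_real,
      Real.norm_of_nonneg (Real.sqrt_nonneg _), ← Complex.ofReal_pow,
      Real.sq_sqrt (div_nonneg (hlam k) r.cast_nonneg)]
  refine ⟨fun j => ∑ l, a j l • e l, fun j => ?_, fun k => ?_⟩
  · have hnorm : ‖∑ l, a j l • e l‖ ^ 2 = 1 := by
      rw [@norm_sq_eq_re_inner ℂ, e.orthonormal.inner_sum]
      simp_rw [hdiag j]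
      rw [← Complex.ofReal_sum, RCLike.re_to_complex, Complex.ofReal_re, ← Finset.sum_div, hsum,
        div_self (NeZero.ne _)]
    exact (pow_eq_one_iff_of_nonneg (norm_nonneg _) two_ne_zero).mp hnorm
  · simp [frameOp_sum_smul_apply, hgram]

end Construction

lemma Submodule.exists_orthonormalBasis_sum_orthogonal {𝕜 E : Type*} [RCLike 𝕜]
    [NormedAddCommGroup E] [InnerProductSpace 𝕜 E] [FiniteDimensional 𝕜 E] (K : Submodule 𝕜 E) :
    ∃ b : OrthonormalBasis (Fin (Module.finrank 𝕜 K) ⊕ Fin (Module.finrank 𝕜 Kᗮ)) 𝕜 E,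
      (∀ i, b (.inl i) ∈ K) ∧ ∀ i, b (.inr i) ∈ Kᗮ :=
  ⟨((stdOrthonormalBasis 𝕜 K).prod (stdOrthonormalBasis 𝕜 Kᗮ)).map K.orthogonalDecomposition.symm,
    by simp, by simp⟩

lemma completable_of_frameOp_eq_smul_starProjection {n p : ℕ}
    {f : Fin p → EuclideanSpace ℂ (Fin n)} {V : Submodule ℂ (EuclideanSpace ℂ (Fin n))} {α c : ℝ}
    (hF : frameOp f = (α : ℂ) • V.starProjection) (hc : 0 < c) (hαc : α ≤ c) (r : ℕ) [NeZero r]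
    (htr : n * c = Module.finrank ℂ V * α + r)
    (hsupp : n ≤ r ∨ c = α ∧ n - Module.finrank ℂ V ≤ r) :
    Completable f (fun _ => 1) r := by
  classical
  obtain ⟨b, hbV, hbW⟩ := V.exists_orthonormalBasis_sum_orthogonal
  have hdim : Module.finrank ℂ V + Module.finrank ℂ Vᗮ = n := by
    simpa using V.finrank_add_finrank_orthogonal
  set lam := Sum.elim (fun _ : Fin (Module.finrank ℂ V) => c - α)
    (fun _ : Fin (Module.finrank ℂ Vᗮ) => c)
  have hlam : ∀ k, 0 ≤ lam k := by rintro (i | i) <;> simp [lam] <;> linarith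
  have hsum : ∑ k, lam k = r := by
    simp only [lam, Fintype.sum_sum_type, Sum.elim_inl, Sum.elim_inr, Finset.sum_const,
      Finset.card_univ, Fintype.card_fin, nsmul_eq_mul]
    have : (n : ℝ) = Module.finrank ℂ V + Module.finrank ℂ Vᗮ := by exact_mod_cast hdim.symm
    rw [this] at htr
    linarith
  obtain ⟨s, hs, hsupp⟩ : ∃ s : Finset _, s.card ≤ r ∧ ∀ k ∉ s, lam k = 0 := by
    rcases hsupp with hr | ⟨rfl, hr⟩
    · exact ⟨Finset.univ, by simpa [hdim] using hr, by simp⟩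
    · refine ⟨Finset.univ.map .inr, by simpa [← hdim] using hr, ?_⟩
      rintro (i | i) hi <;> simp_all [lam]
  obtain ⟨g, hg, hgb⟩ := exists_frameOp_eq_diagonal b hlam r hsum s hs hsupp
  refine ⟨c, g, hc, fun j => by simp [hg j], ?_⟩
  refine ContinuousLinearMap.coe_injective (b.toBasis.ext fun k => ?_)
  rcases k with i | i
  · simp [hF, hgb, V.starProjection_eq_self_iff.mpr (hbV i), lam]
    module
  · simp [hF, hgb, V.starProjection_apply_eq_zero_iff.mpr (hbW i), lam]

section SubspaceTightFrame

variable {n p d : ℕ} {f : Fin p → EuclideanSpace ℂ (Fin n)}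
  {V : Submodule ℂ (EuclideanSpace ℂ (Fin n))}

lemma le_card_and_eq_of_completable (hd : 0 < d) (hf : ∀ i, ‖f i‖ = 1)
    (hdim : Module.finrank ℂ V = d) (hF : frameOp f = ((p / d : ℝ) : ℂ) • V.starProjection)
    {r : ℕ} (hr : Completable f (fun _ => 1) r) :
    ((n : ℝ) - d) * (p / d) ≤ r ∧ (r < n → (r : ℝ) = ((n : ℝ) - d) * (p / d)) := by
  obtain ⟨c, g, hc, hg, h⟩ := hr
  have htr : (p + r : ℝ) = c * n :=
    card_add_card_eq_of_frameOp_add_eq hf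
      (fun j => (pow_eq_one_iff_of_nonneg (norm_nonneg _) two_ne_zero).mp (hg j)) h
  obtain ⟨x, hxV, hx⟩ := Submodule.exists_mem_ne_zero_of_ne_bot
    (Submodule.one_le_finrank_iff.mp (hdim ▸ hd))
  have hαc : (p / d : ℝ) ≤ c :=
    le_of_frameOp_add_eq h hx (by rw [hF]; simp [V.starProjection_eq_self_iff.mpr hxV])
  have hd' : (d : ℝ) ≠ 0 := by positivity
  have hx_eq : ((n : ℝ) - d) * (p / d) = n * (p / d) - p := by field_simp
  refine ⟨?_, fun hrn => ?_⟩
  · rw [hx_eq]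
    nlinarith
  · rw [hx_eq, ← eq_of_frameOp_add_eq_of_lt hF h hc.ne' hrn]
    linarith

lemma completable_iff (hd : 0 < d) (hdn : d < n) (hdp : d ≤ p) (hf : ∀ i, ‖f i‖ = 1)
    (hdim : Module.finrank ℂ V = d) (hF : frameOp f = ((p / d : ℝ) : ℂ) • V.starProjection)
    (r : ℕ) :
    Completable f (fun _ => 1) r ↔
      ((n : ℝ) - d) * (p / d) ≤ r ∧ (r < n → (r : ℝ) = ((n : ℝ) - d) * (p / d)) := by
  refine ⟨le_card_and_eq_of_completable hd hf hdim hF, fun ⟨hle, heq⟩ => ?_⟩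
  have hd' : (0 : ℝ) < d := by exact_mod_cast hd
  have hdn' : (d : ℝ) < n := by exact_mod_cast hdn
  have hn : (0 : ℝ) < n := hd'.trans hdn'
  have hα : 1 ≤ (p / d : ℝ) := by rw [one_le_div hd']; exact_mod_cast hdp
  have hr : (0 : ℝ) < r := lt_of_lt_of_le (mul_pos (by linarith) (by linarith)) hle
  have : NeZero r := ⟨by exact_mod_cast hr.ne'⟩
  refine completable_of_frameOp_eq_smul_starProjection hF (c := (p + r) / n) (by positivity)
    ?_ r ?_ ?_
  · rw [div_le_div_iff₀ hd' hn]
    have := mul_le_mul_of_nonneg_right hle hd'.le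
    rw [mul_assoc, div_mul_cancel₀ _ hd'.ne'] at this
    linarith
  · rw [hdim]
    field_simp
  · by_cases hnr : n ≤ r
    · exact .inl hnr
    · have hr := heq (not_le.mp hnr)
      refine .inr ⟨?_, ?_⟩
      · rw [hr]
        field_simp
        ring
      · rw [hdim]
        have : ((n - d : ℕ) : ℝ) ≤ r := by
          rw [hr, Nat.cast_sub hdn.le]
          exact le_mul_of_one_le_right (by linarith) hα
        exact_mod_cast this

end SubspaceTightFrame

lemma IsLeast.eq_of_le_and_eq_of_lt {x : ℝ} {n r₀ : ℕ}
    (h : IsLeast {k : ℕ | x ≤ k ∧ (k < n → (k : ℝ) = x)} r₀) :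
    (x < n → ((∃ m : ℕ, (m : ℝ) = x) → (r₀ : ℝ) = x) ∧ ((¬ ∃ m : ℕ, (m : ℝ) = x) → r₀ = n)) ∧
      ((n : ℝ) ≤ x → (r₀ : ℤ) = ⌈x⌉) := by
  obtain ⟨⟨hle, heq⟩, hmin⟩ := h
  refine ⟨fun hxn => ⟨?_, fun hx => ?_⟩, fun hnx => ?_⟩
  · rintro ⟨m, rfl⟩
    have : r₀ ≤ m := hmin ⟨le_rfl, fun _ => rfl⟩
    exact_mod_cast le_antisymm this (by exact_mod_cast hle)
  · refine le_antisymm (hmin ⟨hxn.le, fun h => absurd h (lt_irrefl n)⟩) (not_lt.mp fun hr => ?_)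
    exact hx ⟨r₀, heq hr⟩
  · have hceil : ((⌈x⌉.toNat : ℕ) : ℤ) = ⌈x⌉ :=
      Int.toNat_of_nonneg (Int.ceil_nonneg (n.cast_nonneg.trans hnx))
    have hxle : x ≤ (⌈x⌉.toNat : ℕ) := by
      rw [← Int.cast_natCast, hceil]
      exact Int.le_ceil x
    have hr₀ : r₀ ≤ ⌈x⌉.toNat :=
      hmin ⟨hxle, fun h => absurd (hnx.trans hxle) (not_le.mpr (by exact_mod_cast h))⟩
    exact le_antisymm (hceil ▸ by exact_mod_cast hr₀) (Int.ceil_le.mpr (by exact_mod_cast hle))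

theorem minimal_completion_of_subspace_tight_frame_general {n p d : ℕ}
    (hd : 0 < d) (hdn : d < n) (hdp : d ≤ p)
    (f : Fin p → EuclideanSpace ℂ (Fin n)) (hf : ∀ i, ‖f i‖ = 1)
    (hdim : Module.finrank ℂ (Submodule.span ℂ (Set.range f)) = d)
    (hS : ∀ x, frameOp f x = (((p : ℝ) / d : ℝ) : ℂ) •
      ((Submodule.orthogonalProjection (Submodule.span ℂ (Set.range f)) x : Submodule.span ℂ (Set.range f)) :
        EuclideanSpace ℂ (Fin n)))
    (r0 : ℕ) (hr0 : Completable f (fun _ => (1 : ℝ)) r0)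
    (hr0min : ∀ k, Completable f (fun _ => (1 : ℝ)) k → r0 ≤ k) :
    (((n : ℝ) - d) * ((p : ℝ) / d) < n →
      ((∃ m : ℕ, (m : ℝ) = ((n : ℝ) - d) * ((p : ℝ) / d)) →
          (r0 : ℝ) = ((n : ℝ) - d) * ((p : ℝ) / d)) ∧
      ((¬ ∃ m : ℕ, (m : ℝ) = ((n : ℝ) - d) * ((p : ℝ) / d)) → r0 = n)) ∧
    ((n : ℝ) ≤ ((n : ℝ) - d) * ((p : ℝ) / d) →
      (r0 : ℤ) = ⌈((n : ℝ) - d) * ((p : ℝ) / d)⌉) := by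
  have hF : frameOp f =
      (((p : ℝ) / d : ℝ) : ℂ) • (Submodule.span ℂ (Set.range f)).starProjection :=
    ContinuousLinearMap.ext hS
  have hcompl := completable_iff hd hdn hdp hf hdim hF
  exact IsLeast.eq_of_le_and_eq_of_lt
    ⟨(hcompl r0).mp hr0, fun k hk => hr0min k ((hcompl k).mpr hk)⟩

theorem minimal_completion_of_subspace_tight_frame {n p d : ℕ} (hn : 0 < n)
    (hd : 0 < d) (hdn : d < n) (hdp : d ≤ p)
    (f : Fin p → EuclideanSpace ℂ (Fin n)) (hf : ∀ i, ‖f i‖ = 1)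
    (hdim : Module.finrank ℂ (Submodule.span ℂ (Set.range f)) = d)
    (hS : ∀ x, frameOp f x = (((p : ℝ) / d : ℝ) : ℂ) •
      ((Submodule.orthogonalProjection (Submodule.span ℂ (Set.range f)) x : Submodule.span ℂ (Set.range f)) :
        EuclideanSpace ℂ (Fin n)))
    (r0 : ℕ) (hr0 : Completable f (fun _ => (1 : ℝ)) r0)
    (hr0min : ∀ k, Completable f (fun _ => (1 : ℝ)) k → r0 ≤ k) :
    (((n : ℝ) - d) * ((p : ℝ) / d) < n →
      ((∃ m : ℕ, (m : ℝ) = ((n : ℝ) - d) * ((p : ℝ) / d)) →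
          (r0 : ℝ) = ((n : ℝ) - d) * ((p : ℝ) / d)) ∧
      ((¬ ∃ m : ℕ, (m : ℝ) = ((n : ℝ) - d) * ((p : ℝ) / d)) → r0 = n)) ∧
    ((n : ℝ) ≤ ((n : ℝ) - d) * ((p : ℝ) / d) →
      (r0 : ℤ) = ⌈((n : ℝ) - d) * ((p : ℝ) / d)⌉) :=
  minimal_completion_of_subspace_tight_frame_general hd hdn hdp f hf hdim hS r0 hr0 hr0min
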